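/- Let ĝ ∈ ℝ^{m−1} be nonzero and define φ(y) = y₀ − ‖ŷ‖ for y = (y₀, ŷ) near a point g with ĝ ≠ 0. Then for directions d, with G(x) a twice differentiable map into ℝᵐ with g = G(x̄), ĝ = Ĝ(x̄), g₀ = ‖ĝ‖, and ⟨DG(x̄)d, R g⟩ = 0, the second derivative of φ ∘ G at x̄ in direction d satisfies ⟨D²(φ∘G)(x̄)d, d⟩ = (1/g₀)(⟨R·DG(x̄)d, DG(x̄)d⟩ + ⟨D²G(x̄)[d,d], R g⟩), where R = diag(1, −I_{m−1}). -/

import Mathlib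

/-!
Since `ĝ ≠ 0`, `φ y = y₀ - ‖ŷ‖` is `C²` near `g`, so the second-order chain rule gives
`D²(φ ∘ G)(x̄)[d, d] = D²φ(g)[u, u] + Dφ(g) v` with `u = DG(x̄) d` and `v = D²G(x̄)[d, d]`.
Here `Dφ(g) v = v₀ - ⟨ĝ, v̂⟩ / g₀ = ⟨v, R g⟩ / g₀` and, from the Hessian of the norm,
`D²φ(g)[u, u] = -(‖û‖² - ⟨ĝ, û⟩² / g₀²) / g₀`. The condition `⟨u, R g⟩ = 0` reads
`⟨ĝ, û⟩ = g₀ u₀`, which turns the latter into `(u₀² - ‖û‖²) / g₀ = ⟨R u, u⟩ / g₀`.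
-/

open scoped RealInnerProductSpace

/-- The norm of the "hat part" `ŷ` of `y = (y₀, ŷ) ∈ ℝ × ℝ^{m-1}`. -/
noncomputable def hatNorm {m : ℕ} (z : EuclideanSpace ℝ (Fin m)) : ℝ :=
  Real.sqrt (∑ i : Fin m, if (i : ℕ) = 0 then 0 else z i ^ 2)

/-- The reflection matrix `R = diag(1, -I_{m-1})`, i.e. `R(z₀, ẑ) = (z₀, -ẑ)`. -/
def reflR (m : ℕ) [NeZero m] (z : EuclideanSpace ℝ (Fin m)) : EuclideanSpace ℝ (Fin m) :=
  WithLp.toLp 2 (fun i => if (i : ℕ) = 0 then z 0 else -z i)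

open Filter Topology

section SecondOrderChainRule

variable {𝕜 : Type*} [NontriviallyNormedField 𝕜] {E F K : Type*}
  [NormedAddCommGroup E] [NormedSpace 𝕜 E] [NormedAddCommGroup F] [NormedSpace 𝕜 F]
  [NormedAddCommGroup K] [NormedSpace 𝕜 K]

theorem ContDiffAt.differentiableAt_fderiv {f : E → F} {x : E} (hf : ContDiffAt 𝕜 2 f x) :
    DifferentiableAt 𝕜 (fderiv 𝕜 f) x :=
  (hf.fderiv_right (m := 1) le_rfl).differentiableAt one_ne_zero

theorem fderiv_fderiv_apply {f : E → F} {x : E} (hf : DifferentiableAt 𝕜 (fderiv 𝕜 f) x)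
    (a b : E) : fderiv 𝕜 (fun y => fderiv 𝕜 f y b) x a = fderiv 𝕜 (fderiv 𝕜 f) x a b := by
  simp [fderiv_clm_apply hf (differentiableAt_const b)]

theorem ContinuousLinearMap.fderiv_fderiv (L : E →L[𝕜] F) (x : E) :
    fderiv 𝕜 (fderiv 𝕜 L) x = 0 := by
  rw [show fderiv 𝕜 L = fun _ => L from funext fun _ => L.fderiv]
  exact fderiv_const_apply L

theorem fderiv_fderiv_comp_apply {ψ : F → K} {G : E → F} {x : E}
    (hψ : ContDiffAt 𝕜 2 ψ (G x)) (hG : ContDiffAt 𝕜 2 G x) (a b : E) :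
    fderiv 𝕜 (fderiv 𝕜 (ψ ∘ G)) x a b =
      fderiv 𝕜 (fderiv 𝕜 ψ) (G x) (fderiv 𝕜 G x a) (fderiv 𝕜 G x b) +
        fderiv 𝕜 ψ (G x) (fderiv 𝕜 (fderiv 𝕜 G) x a b) := by
  have hchain : fderiv 𝕜 (ψ ∘ G) =ᶠ[𝓝 x] fun y => (fderiv 𝕜 ψ (G y)).comp (fderiv 𝕜 G y) := by
    filter_upwards [hG.eventually (by simp),
      hG.continuousAt.eventually (hψ.eventually (by simp))] with y hGy hψy
    exact fderiv_comp y (hψy.differentiableAt (by simp)) (hGy.differentiableAt (by simp))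
  have hG1 : HasFDerivAt G (fderiv 𝕜 G x) x := (hG.differentiableAt (by simp)).hasFDerivAt
  have hcomp : HasFDerivAt (fun y => (fderiv 𝕜 ψ (G y)).comp (fderiv 𝕜 G y)) _ x :=
    (hψ.differentiableAt_fderiv.hasFDerivAt.comp x hG1).clm_comp
      hG.differentiableAt_fderiv.hasFDerivAt
  rw [hchain.fderiv_eq, hcomp.fderiv]
  simp [add_comm]

end SecondOrderChainRule

section Norm

variable {F : Type*} [NormedAddCommGroup F] [InnerProductSpace ℝ F] {y : F}

theorem hasFDerivAt_norm (hy : y ≠ 0) : HasFDerivAt (‖·‖) (‖y‖⁻¹ • innerSL ℝ y) y := by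
  have hsqrt := (hasStrictFDerivAt_norm_sq y).hasFDerivAt.sqrt (by simpa using hy)
  simp only [Real.sqrt_sq (norm_nonneg _)] at hsqrt
  convert hsqrt using 1
  module

theorem fderiv_fderiv_norm_apply (hy : y ≠ 0) (a b : F) :
    fderiv ℝ (fderiv ℝ (‖·‖)) y a b = (⟪a, b⟫ - ⟪y, a⟫ * ⟪y, b⟫ / ‖y‖ ^ 2) / ‖y‖ := by
  have hderiv : (fun z : F => fderiv ℝ (‖·‖) z b) =ᶠ[𝓝 y] fun z => ‖z‖⁻¹ * ⟪z, b⟫ := by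
    filter_upwards [isOpen_ne.mem_nhds hy] with z hz
    simp [(hasFDerivAt_norm hz).fderiv]
  have hnorm_inv : HasFDerivAt (fun z : F => ‖z‖⁻¹) (-(‖y‖ ^ 2)⁻¹ • ‖y‖⁻¹ • innerSL ℝ y) y :=
    (hasDerivAt_inv (norm_ne_zero_iff.mpr hy)).comp_hasFDerivAt y (hasFDerivAt_norm hy)
  have hinner : HasFDerivAt (fun z : F => ⟪z, b⟫) _ y :=
    (hasFDerivAt_id y).inner ℝ (hasFDerivAt_const b y)
  rw [← fderiv_fderiv_apply (contDiffAt_norm ℝ hy).differentiableAt_fderiv, hderiv.fderiv_eq,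
    (hnorm_inv.fun_mul hinner).fderiv]
  simp only [add_apply, smul_apply, zero_apply, ContinuousLinearMap.comp_apply,
    ContinuousLinearMap.prod_apply, ContinuousLinearMap.id_apply, fderivInnerCLM_apply,
    inner_zero_right, smul_eq_mul, coe_innerSL_apply]
  ring

end Norm

section ConeFunction

variable {F F' : Type*} [NormedAddCommGroup F] [NormedSpace ℝ F] [NormedAddCommGroup F']
  [InnerProductSpace ℝ F'] (ℓ : F →L[ℝ] ℝ) (P : F →L[ℝ] F') {y : F}

theorem contDiffAt_sub_norm_comp {n : WithTop ℕ∞} (hy : P y ≠ 0) :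
    ContDiffAt ℝ n (fun z => ℓ z - ‖P z‖) y :=
  ℓ.contDiff.contDiffAt.sub ((contDiffAt_norm ℝ hy).comp y P.contDiff.contDiffAt)

theorem fderiv_sub_norm_comp_apply (hy : P y ≠ 0) (h : F) :
    fderiv ℝ (fun z => ℓ z - ‖P z‖) y h = ℓ h - ⟪P y, P h⟫ / ‖P y‖ := by
  have hderiv : HasFDerivAt (fun z => ℓ z - ‖P z‖) _ y :=
    ℓ.hasFDerivAt.sub ((hasFDerivAt_norm hy).comp y P.hasFDerivAt)
  simp [hderiv.fderiv, div_eq_inv_mul]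

theorem fderiv_fderiv_sub_norm_comp_apply (hy : P y ≠ 0) (a b : F) :
    fderiv ℝ (fderiv ℝ (fun z => ℓ z - ‖P z‖)) y a b =
      -((⟪P a, P b⟫ - ⟪P y, P a⟫ * ⟪P y, P b⟫ / ‖P y‖ ^ 2) / ‖P y‖) := by
  have hsub := congr($(iteratedFDeriv_sub_apply (i := 2) ℓ.contDiff.contDiffAt
    ((contDiffAt_norm ℝ hy).comp y P.contDiff.contDiffAt)) ![a, b])
  have hcomp := fderiv_fderiv_comp_apply (contDiffAt_norm ℝ hy) P.contDiff.contDiffAt a b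
  simp only [iteratedFDeriv_two_apply, sub_apply, Matrix.cons_val_zero,
    Matrix.cons_val_one] at hsub
  rw [show (fun z => ℓ z - ‖P z‖) = ℓ - norm ∘ P from rfl, hsub, hcomp]
  simp [ℓ.fderiv_fderiv, P.fderiv_fderiv, fderiv_fderiv_norm_apply hy]

end ConeFunction

section SecondOrderCone

variable {m : ℕ}

/-- `ŷ` embedded in `ℝᵐ` with first coordinate `0`, so that `hatNorm = ‖·‖ ∘ hatProj m`. -/
noncomputable def hatProj (m : ℕ) : EuclideanSpace ℝ (Fin m) →L[ℝ] EuclideanSpace ℝ (Fin m) :=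
  LinearMap.toContinuousLinearMap
    { toFun := fun z => WithLp.toLp 2 fun i => if (i : ℕ) = 0 then 0 else z i
      map_add' := fun z w => by ext i; by_cases h : (i : ℕ) = 0 <;> simp [h]
      map_smul' := fun c z => by ext i; by_cases h : (i : ℕ) = 0 <;> simp [h] }

@[simp]
theorem hatProj_apply (z : EuclideanSpace ℝ (Fin m)) (i : Fin m) :
    hatProj m z i = if (i : ℕ) = 0 then 0 else z i :=
  rfl

theorem hatNorm_eq_norm_hatProj (z : EuclideanSpace ℝ (Fin m)) : hatNorm z = ‖hatProj m z‖ := by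
  rw [EuclideanSpace.norm_eq, hatNorm]
  congr 1
  refine Finset.sum_congr rfl fun i _ => ?_
  split_ifs <;> simp [*]

theorem inner_reflR [NeZero m] (z w : EuclideanSpace ℝ (Fin m)) :
    ⟪reflR m z, w⟫ = z 0 * w 0 - ⟪hatProj m z, hatProj m w⟫ := by
  rw [eq_sub_iff_add_eq, PiLp.inner_apply, PiLp.inner_apply, ← Finset.sum_add_distrib]
  simp only [reflR, hatProj_apply, RCLike.inner_apply, conj_trivial]
  rw [Fintype.sum_eq_single 0 fun i hi => ?_]
  · simp [mul_comm]
  · have hi : (i : ℕ) ≠ 0 := Fin.val_ne_iff.mpr hi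
    simp [hi]

end SecondOrderCone

theorem stmt12_general (n m : ℕ) [NeZero m]
    (G : EuclideanSpace ℝ (Fin n) → EuclideanSpace ℝ (Fin m))
    (hG : ContDiff ℝ 2 G) (x0 : EuclideanSpace ℝ (Fin n))
    (hbd : hatNorm (G x0) = G x0 0) (hg0 : 0 < G x0 0)
    (d : EuclideanSpace ℝ (Fin n))
    (horth : ⟪fderiv ℝ G x0 d, reflR m (G x0)⟫ = 0) :
    fderiv ℝ (fun x => fderiv ℝ (fun y => G y 0 - hatNorm (G y)) x d) x0 d =
      (1 / G x0 0) *
        (⟪reflR m (fderiv ℝ G x0 d), fderiv ℝ G x0 d⟫ +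
          ⟪fderiv ℝ (fderiv ℝ G) x0 d d, reflR m (G x0)⟫) := by
  set φ := fun z => EuclideanSpace.proj (0 : Fin m) z - ‖hatProj m z‖
  have hφG : (fun y => G y 0 - hatNorm (G y)) = φ ∘ G := by
    funext y; simp [φ, hatNorm_eq_norm_hatProj]
  have hPg : ‖hatProj m (G x0)‖ = G x0 0 := (hatNorm_eq_norm_hatProj _).symm.trans hbd
  have hPg0 : hatProj m (G x0) ≠ 0 := norm_ne_zero_iff.mp (hPg ▸ hg0.ne')
  have hφ : ContDiffAt ℝ 2 φ (G x0) := contDiffAt_sub_norm_comp _ _ hPg0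
  have horth_hat :
      ⟪hatProj m (G x0), hatProj m (fderiv ℝ G x0 d)⟫ = G x0 0 * fderiv ℝ G x0 d 0 := by
    rw [real_inner_comm, inner_reflR] at horth
    linarith
  rw [hφG, fderiv_fderiv_apply (hφ.comp x0 hG.contDiffAt).differentiableAt_fderiv,
    fderiv_fderiv_comp_apply hφ hG.contDiffAt, fderiv_fderiv_sub_norm_comp_apply _ _ hPg0,
    fderiv_sub_norm_comp_apply _ _ hPg0, real_inner_comm (reflR m (G x0)), inner_reflR,
    inner_reflR, horth_hat, hPg, PiLp.proj_apply]
  field_simp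
  ring

/-- Second derivative of `φ ∘ G`, `φ(y) = y₀ - ‖ŷ‖`, at a point `x̄` with
`G(x̄) = g` a nonzero boundary point of the second-order cone (`g₀ = ‖ĝ‖ > 0`),
in a direction `d` with `⟨DG(x̄)d, Rg⟩ = 0`:
`⟨D²(φ∘G)(x̄)d, d⟩ = (1/g₀)(⟨R·DG(x̄)d, DG(x̄)d⟩ + ⟨D²G(x̄)[d,d], Rg⟩)`. -/
theorem stmt12 (n m : ℕ) [NeZero m] (hm : 2 ≤ m)
    (G : EuclideanSpace ℝ (Fin n) → EuclideanSpace ℝ (Fin m))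
    (hG : ContDiff ℝ 2 G) (x0 : EuclideanSpace ℝ (Fin n))
    (hbd : hatNorm (G x0) = G x0 0) (hg0 : 0 < G x0 0)
    (d : EuclideanSpace ℝ (Fin n))
    (horth : ⟪fderiv ℝ G x0 d, reflR m (G x0)⟫ = 0) :
    fderiv ℝ (fun x => fderiv ℝ (fun y => G y 0 - hatNorm (G y)) x d) x0 d =
      (1 / G x0 0) *
        (⟪reflR m (fderiv ℝ G x0 d), fderiv ℝ G x0 d⟫ +
          ⟪fderiv ℝ (fderiv ℝ G) x0 d d, reflR m (G x0)⟫) :=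
  stmt12_general n m G hG x0 hbd hg0 d horth
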